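/- Let k be a field, Π = (V, W) a presentation on a set E over k, and F a finite subset of E. Then there are disjoint subsets P_F and Q_F of E∖F such that E∖(P_F ∪ Q_F) is finite, and such that, setting Π' = Π/P_F ∖ Q_F, one has Π'↾F = Π↾F and Π'.F = Π.F. -/

import Mathlib

open Function Set

noncomputable section

variable {α k : Type*} [Field k]

/-- Axiom (O2) for a pair of families of subsets of the ground set `E`. -/
def AxO2 (E : Set α) (𝒞 𝒟 : Set (Set α)) : Prop :=
  ∀ P Q : Set α, ∀ e : α, Disjoint P Q → e ∉ P → e ∉ Q → P ∪ Q ∪ {e} = E →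
    (∃ C ∈ 𝒞, e ∈ C ∧ C ⊆ P ∪ {e}) ∨ (∃ D ∈ 𝒟, e ∈ D ∧ D ⊆ Q ∪ {e})

/-- Two vectors are orthogonal: supports intersect finitely and the sum of products is zero. -/
def Orthog (v w : α → k) : Prop :=
  (support v ∩ support w).Finite ∧ ∑ᶠ e, v e * w e = 0

/-- The subspace of `k^α` of functions supported in `E` (the formal meaning of `k^E`). -/
def FunOn (E : Set α) : Submodule k (α → k) where
  carrier := {v | support v ⊆ E}
  add_mem' hf hg := (support_add _ _).trans (union_subset hf hg)
  zero_mem' := by simp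
  smul_mem' c f hf := (support_const_smul_subset c f).trans hf

/-- The set `S(V)` of supports of elements of `V`. -/
def suppSet (V : Submodule k (α → k)) : Set (Set α) := support '' (V : Set (α → k))

/-- A presentation on the ground set `E` over `k`: a pair of orthogonal subspaces of `k^E`
whose families of supports satisfy (O2). -/
def IsPresentationOn (E : Set α) (V W : Submodule k (α → k)) : Prop :=
  V ≤ FunOn E ∧ W ≤ FunOn E ∧ (∀ v ∈ V, ∀ w ∈ W, Orthog v w) ∧
    AxO2 E (suppSet V) (suppSet W)

/-- Minimal nonempty elements of a family of sets. -/
def MinNE (𝒜 : Set (Set α)) (o : Set α) : Prop :=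
  o ∈ 𝒜 ∧ o.Nonempty ∧ ∀ o' ∈ 𝒜, o'.Nonempty → o' ⊆ o → o' = o

/-- A circuit of a matroid: a minimal dependent set. -/
def MatCircuit (M : Matroid α) (C : Set α) : Prop := Minimal M.Dep C

/-- The pair `(V, W)` presents the matroid `M` on ground set `E`. -/
def Presents (E : Set α) (V W : Submodule k (α → k)) (M : Matroid α) : Prop :=
  M.E = E ∧ (∀ C, MatCircuit M C ↔ MinNE (suppSet V) C) ∧
    (∀ D, MatCircuit M✶ D ↔ MinNE (suppSet W) D)

/-- Restriction of a vector to `X`, as a linear endomap of `k^α` (zeroing outside `X`). -/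
def indLM (X : Set α) : (α → k) →ₗ[k] (α → k) where
  toFun v := X.indicator v
  map_add' f g := by
    funext a
    by_cases h : a ∈ X <;> simp [Set.indicator_of_mem, Set.indicator_of_notMem, h]
  map_smul' c f := by
    funext a
    by_cases h : a ∈ X <;> simp [Set.indicator_of_mem, Set.indicator_of_notMem, h]

/-- Contraction `V.X` of a subspace to `X`. -/
def conV (V : Submodule k (α → k)) (X : Set α) : Submodule k (α → k) :=
  Submodule.map (indLM X) V

/-- Restriction of a pair `(V,W)` to the ground set `X`: `(V↾X, W.X)`. -/
def pairRes (Pr : Submodule k (α → k) × Submodule k (α → k)) (X : Set α) :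
    Submodule k (α → k) × Submodule k (α → k) :=
  (Pr.1 ⊓ FunOn X, conV Pr.2 X)

/-- Contraction of a pair `(V,W)` to the ground set `X`: `(V.X, W↾X)`. -/
def pairCon (Pr : Submodule k (α → k) × Submodule k (α → k)) (X : Set α) :
    Submodule k (α → k) × Submodule k (α → k) :=
  (conV Pr.1 X, Pr.2 ⊓ FunOn X)

/-- A set `I` is `Π`-independent (w.r.t. the vector subspace `V`): it includes no
nonempty support of a vector. -/
def PresIndep (V : Submodule k (α → k)) (I : Set α) : Prop :=
  ∀ v ∈ V, support v ⊆ I → v = 0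

end

/-!
By (O2), a finitely supported vector on `E` orthogonal to all of `W` lies in `V`: peel off
its coordinates one at a time with the vectors of `V` that (O2) provides. Since `F` is finite,
`V.F` and `W.F` are spanned by the restrictions of finitely many vectors of `V` and of `W`;
let `A` and `B` be the unions of their supports, so that `A ∩ B` is finite by orthogonality.
Contract `P = E ∖ (F ∪ B)` and delete `Q = (E ∩ B) ∖ (F ∪ A)`. The spanning vectors of `W`
avoid `P` and those of `V` avoid `Q`, so they survive and the contractions to `F` do not
change. A vector of `V` whose restriction to `E ∖ P` lives in `F` meets the spanning vectors
of `W` only inside `F`, so its restriction to `F` is orthogonal to `W`, hence lies in `V`;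
dually for `W`.
-/

open Submodule

section

variable {α k : Type*} [Field k]

lemma Orthog.symm {v w : α → k} (h : Orthog v w) : Orthog w v :=
  ⟨by rw [inter_comm]; exact h.1, by simpa only [mul_comm] using h.2⟩

lemma AxO2.symm {E : Set α} {𝒞 𝒟 : Set (Set α)} (h : AxO2 E 𝒞 𝒟) : AxO2 E 𝒟 𝒞 :=
  fun P Q e hPQ heP heQ hE => (h Q P e hPQ.symm heQ heP (by rwa [union_comm Q P])).symm

section Subspaces

variable {F Z : Set α} {U V : Submodule k (α → k)}

lemma funOn_mono {X Y : Set α} (h : X ⊆ Y) : (FunOn X : Submodule k (α → k)) ≤ FunOn Y :=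
  fun _ hx => (show support _ ⊆ X from hx).trans h

lemma finiteDimensional_funOn (hF : F.Finite) :
    FiniteDimensional k (FunOn F : Submodule k (α → k)) := by
  have := hF.to_subtype
  refine FiniteDimensional.of_injective
    ((LinearMap.funLeft k k ((↑) : F → α)).comp (FunOn F).subtype) fun u u' huu' => ?_
  ext a
  by_cases ha : a ∈ F
  · exact congrFun huu' ⟨a, ha⟩
  · rw [notMem_support.1 fun h => ha (u.2 h), notMem_support.1 fun h => ha (u'.2 h)]

lemma exists_finset_conV_eq_span (hF : F.Finite) (V : Submodule k (α → k)) :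
    ∃ S : Finset (α → k), ↑S ⊆ (V : Set (α → k)) ∧
      conV V F = span k (F.indicator '' (S : Set (α → k))) := by
  classical
  have := finiteDimensional_funOn (k := k) hF
  have : FiniteDimensional k (conV V F) := finiteDimensional_of_le (S₂ := FunOn F) <| by
    rintro _ ⟨v, -, rfl⟩
    exact support_indicator_subset (f := v)
  obtain ⟨T, hT⟩ := Module.Finite.iff_fg.1 this
  obtain ⟨S, hSV, rfl⟩ :=
    Finset.subset_set_image_iff.1 (hT ▸ subset_span (s := (T : Set (α → k))))
  exact ⟨S, hSV, by rw [← hT, Finset.coe_image]; rfl⟩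

lemma indLM_comp_of_subset (h : F ⊆ Z) :
    (indLM F).comp (indLM Z) = (indLM F : (α → k) →ₗ[k] (α → k)) := by
  ext x : 1
  exact (indicator_indicator ..).trans (by rw [inter_eq_left.2 h]; rfl)

lemma conV_conV_of_subset (h : F ⊆ Z) : conV (conV U Z) F = conV U F := by
  rw [conV, conV, ← map_comp, indLM_comp_of_subset h]; rfl

lemma inf_funOn_le_conV (h : F ⊆ Z) : U ⊓ FunOn F ≤ conV U Z :=
  fun x hx => ⟨x, hx.1, indicator_eq_self.2 ((show support x ⊆ F from hx.2).trans h)⟩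

lemma conV_inf_funOn_eq {S : Set (α → k)} (hSV : S ⊆ V)
    (hS : conV V F ≤ span k (F.indicator '' S)) (hSZ : ∀ u ∈ S, support u ⊆ Z) :
    conV (V ⊓ FunOn Z) F = conV V F :=
  le_antisymm (map_mono inf_le_left) <| hS.trans <| span_le.2 <| by
    rintro _ ⟨u, hu, rfl⟩
    exact ⟨u, ⟨hSV hu, hSZ u hu⟩, rfl⟩

end Subspaces

section Orthogonality

variable {E F : Set α} {V W : Submodule k (α → k)}

lemma exists_mem_support_subset_of_orthogonal (hO2 : AxO2 E (suppSet V) (suppSet W))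
    {x : α → k} (hxE : support x ⊆ E) (hx : ∀ w ∈ W, ∑ᶠ a, x a * w a = 0)
    {e : α} (he : e ∈ support x) : ∃ v ∈ V, e ∈ support v ∧ support v ⊆ support x := by
  have hpart : support x \ {e} ∪ (E \ support x) ∪ {e} = E := by
    ext a
    by_cases hax : a ∈ support x <;> by_cases hae : a = e <;> simp_all
  rcases hO2 (support x \ {e}) (E \ support x) e (disjoint_sdiff_right.mono_left sdiff_subset)
      (fun h => h.2 rfl) (fun h => h.2 he) hpart with
    ⟨_, ⟨v, hv, rfl⟩, hev, hvx⟩ | ⟨_, ⟨w, hw, rfl⟩, hew, hwx⟩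
  · refine ⟨v, hv, hev, fun a ha => ?_⟩
    rcases hvx ha with h | rfl
    exacts [h.1, he]
  · -- `x` and `w` meet only in `e`, so their pairing is `x e * w e ≠ 0`.
    refine absurd (hx w hw) ?_
    rw [finsum_eq_single _ e fun a hae => ?_]
    · exact mul_ne_zero he hew
    · by_contra hxw
      rcases hwx (right_ne_zero_of_mul hxw) with ⟨-, hxa⟩ | rfl
      exacts [hxa (left_ne_zero_of_mul hxw), hae rfl]

lemma mem_of_orthogonal (hO2 : AxO2 E (suppSet V) (suppSet W))
    (horth : ∀ v ∈ V, ∀ w ∈ W, Orthog v w) {x : α → k} (hfin : (support x).Finite)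
    (hxE : support x ⊆ E) (hx : ∀ w ∈ W, ∑ᶠ a, x a * w a = 0) : x ∈ V := by
  induction hn : (support x).ncard using Nat.strong_induction_on generalizing x with
  | _ n ih =>
  rcases eq_or_ne x 0 with rfl | hx0
  · exact V.zero_mem
  obtain ⟨e, he⟩ := support_nonempty_iff.2 hx0
  obtain ⟨v, hv, hev, hvx⟩ := exists_mem_support_subset_of_orthogonal hO2 hxE hx he
  -- Subtracting a multiple of `v` kills the coordinate `e` and stays orthogonal to `W`.
  set x' := x - (x e / v e) • v
  have hx'x : support x' ⊆ support x \ {e} := by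
    intro a ha
    constructor
    · by_contra hxa
      have hva : v a = 0 := notMem_support.1 fun h => hxa (hvx h)
      simp [x', notMem_support.1 hxa, hva] at ha
    · rintro rfl
      simp [x', div_mul_cancel₀ _ (mem_support.1 hev)] at ha
  have hx'W : ∀ w ∈ W, ∑ᶠ a, x' a * w a = 0 := by
    intro w hw
    have hfin_xw : (support fun a => x a * w a).Finite := hfin.subset (support_mul_subset_left ..)
    have hfin_vw : (support fun a => x e / v e * (v a * w a)).Finite :=
      hfin.subset ((support_mul_subset_right ..).trans ((support_mul_subset_left ..).trans hvx))
    simp only [x', Pi.sub_apply, Pi.smul_apply, smul_eq_mul, sub_mul, mul_assoc]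
    rw [finsum_sub_distrib hfin_xw hfin_vw, ← mul_finsum, hx w hw, (horth v hv w hw).2,
      mul_zero, sub_zero]
  have hlt : (support x').ncard < n :=
    hn ▸ ncard_lt_ncard (hx'x.trans_ssubset (sdiff_singleton_ssubset.2 he)) hfin
  have := ih _ hlt (hfin.subset (hx'x.trans sdiff_subset)) ((hx'x.trans sdiff_subset).trans hxE)
    hx'W rfl
  simpa [x'] using V.add_mem this (V.smul_mem (x e / v e) hv)

lemma indicator_mem_of_support_inter_subset (hO2 : AxO2 E (suppSet V) (suppSet W))
    (horth : ∀ v ∈ V, ∀ w ∈ W, Orthog v w) (hFE : F ⊆ E) (hF : F.Finite)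
    {T : Set (α → k)} (hTW : T ⊆ W) (hT : conV W F ≤ span k (F.indicator '' T))
    {v : α → k} (hv : v ∈ V) (hvT : ∀ u ∈ T, support v ∩ support u ⊆ F) :
    F.indicator v ∈ V := by
  classical
  set x := F.indicator v
  have hxF : support x ⊆ F := support_indicator_subset
  -- Pairing with `x` is linear and sees only the coordinates in `F`, so it vanishes on `W.F`
  -- as soon as it vanishes on the restrictions of the vectors of `T`.
  let L : (α → k) →ₗ[k] k := ∑ a ∈ hF.toFinset, x a • LinearMap.proj a
  have hL : ∀ y, L y = ∑ᶠ a, x a * y a := fun y => by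
    rw [finsum_eq_sum_of_support_subset _ (s := hF.toFinset) ?_]
    · simp [L]
    · rw [hF.coe_toFinset]
      exact (support_mul_subset_left ..).trans hxF
  have hLF : ∀ y, L (F.indicator y) = L y := fun y => by
    simp only [hL]
    refine finsum_congr fun a => ?_
    by_cases ha : a ∈ F <;> simp [x, ha]
  have hTL : span k (F.indicator '' T) ≤ LinearMap.ker L := span_le.2 <| by
    rintro _ ⟨u, hu, rfl⟩
    rw [SetLike.mem_coe, LinearMap.mem_ker, hLF, hL, ← (horth v hv u (hTW hu)).2]
    refine finsum_congr fun a => ?_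
    by_cases ha : a ∈ F
    · simp [x, ha]
    · have : v a * u a = 0 := by
        by_contra h
        exact ha (hvT u hu ⟨left_ne_zero_of_mul h, right_ne_zero_of_mul h⟩)
      simp [x, ha, this]
  refine mem_of_orthogonal hO2 horth (hF.subset hxF) (hxF.trans hFE) fun w hw => ?_
  rw [← hL, ← hLF]
  exact hTL (hT ⟨w, hw, rfl⟩)

lemma conV_inf_funOn_le_of_support_inter_subset (hO2 : AxO2 E (suppSet V) (suppSet W))
    (horth : ∀ v ∈ V, ∀ w ∈ W, Orthog v w) (hFE : F ⊆ E) (hF : F.Finite)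
    {T : Set (α → k)} (hTW : T ⊆ W) (hT : conV W F ≤ span k (F.indicator '' T))
    {U : Submodule k (α → k)} {Z : Set α} (hFZ : F ⊆ Z) (hUV : U ≤ V)
    (hUT : ∀ v ∈ U, ∀ u ∈ T, support v ∩ support u ⊆ Z) :
    conV U Z ⊓ FunOn F ≤ V ⊓ FunOn F := by
  rintro _ ⟨⟨v, hv, rfl⟩, hmem⟩
  have hvF : support (Z.indicator v) ⊆ F := hmem
  have hZF : Z.indicator v = F.indicator v := by
    ext a
    by_cases ha : a ∈ F
    · simp [ha, hFZ ha]
    · simpa [ha] using notMem_support.1 fun h => ha (hvF h)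
  refine ⟨?_, hvF⟩
  change Z.indicator v ∈ V
  rw [hZF]
  refine indicator_mem_of_support_inter_subset hO2 horth hFE hF hTW hT (hUV hv)
    fun u hu a ha => ?_
  exact hvF (by simpa [support_indicator, ha.1] using hUT v hv u hu ha)

end Orthogonality

section Reduction

variable {E F P Q : Set α} {V W : Submodule k (α → k)}

lemma conV_inf_funOn_le_conV_inf_funOn {X Z : Set α} :
    conV (V ⊓ FunOn Z) X ≤ conV V X ⊓ FunOn (X ∩ Z) := by
  rintro _ ⟨v, ⟨hv, hvZ⟩, rfl⟩
  refine ⟨⟨v, hv, rfl⟩, ?_⟩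
  show support (X.indicator v) ⊆ X ∩ Z
  rw [support_indicator]
  exact inter_subset_inter_right X hvZ

theorem pairRes_reduction_eq (h : IsPresentationOn E V W) (hFE : F ⊆ E) (hF : F.Finite)
    {T : Set (α → k)} (hTW : T ⊆ W) (hT : conV W F ≤ span k (F.indicator '' T))
    (hFP : Disjoint F P) (hFQ : Disjoint F Q) (hTP : ∀ u ∈ T, Disjoint (support u) P) :
    pairRes (pairRes (pairCon (V, W) (E \ P)) (E \ (P ∪ Q))) F = pairRes (V, W) F := by
  obtain ⟨hVE, hWE, horth, hO2⟩ := h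
  have hFX : F ⊆ E \ P := subset_sdiff.2 ⟨hFE, hFP⟩
  have hFY : F ⊆ E \ (P ∪ Q) := subset_sdiff.2 ⟨hFE, disjoint_union_right.2 ⟨hFP, hFQ⟩⟩
  refine Prod.ext ?_ ?_
  · show conV V (E \ P) ⊓ FunOn (E \ (P ∪ Q)) ⊓ FunOn F = V ⊓ FunOn F
    rw [inf_assoc, inf_eq_right.2 (funOn_mono hFY)]
    refine le_antisymm ?_ (le_inf (inf_funOn_le_conV hFX) inf_le_right)
    refine conV_inf_funOn_le_of_support_inter_subset hO2 horth hFE hF hTW hT hFX le_rfl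
      fun v hv u hu a ha => ?_
    exact ⟨hVE hv ha.1, (hTP u hu).notMem_of_mem_left ha.2⟩
  · show conV (conV (W ⊓ FunOn (E \ P)) (E \ (P ∪ Q))) F = conV W F
    rw [conV_conV_of_subset hFY]
    exact conV_inf_funOn_eq hTW hT fun u hu => subset_sdiff.2 ⟨hWE (hTW hu), hTP u hu⟩

theorem pairCon_reduction_eq (h : IsPresentationOn E V W) (hFE : F ⊆ E) (hF : F.Finite)
    {S : Set (α → k)} (hSV : S ⊆ V) (hS : conV V F ≤ span k (F.indicator '' S))
    (hFP : Disjoint F P) (hFQ : Disjoint F Q) (hSQ : ∀ u ∈ S, Disjoint (support u) Q) :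
    pairCon (pairRes (pairCon (V, W) (E \ P)) (E \ (P ∪ Q))) F = pairCon (V, W) F := by
  obtain ⟨hVE, hWE, horth, hO2⟩ := h
  have hFX : F ⊆ E \ P := subset_sdiff.2 ⟨hFE, hFP⟩
  have hFY : F ⊆ E \ (P ∪ Q) := subset_sdiff.2 ⟨hFE, disjoint_union_right.2 ⟨hFP, hFQ⟩⟩
  have hSE : ∀ u ∈ S, support u ⊆ E \ Q := fun u hu =>
    subset_sdiff.2 ⟨hVE (hSV hu), hSQ u hu⟩
  refine Prod.ext ?_ ?_
  · show conV (conV V (E \ P) ⊓ FunOn (E \ (P ∪ Q))) F = conV V F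
    refine le_antisymm ((map_mono inf_le_left).trans (conV_conV_of_subset hFX).le) ?_
    calc conV V F = conV (conV (V ⊓ FunOn (E \ Q)) (E \ P)) F := by
          rw [conV_conV_of_subset hFX, conV_inf_funOn_eq hSV hS hSE]
      _ ≤ _ := map_mono (sdiff_inter_sdiff ▸ conV_inf_funOn_le_conV_inf_funOn)
  · show conV (W ⊓ FunOn (E \ P)) (E \ (P ∪ Q)) ⊓ FunOn F = W ⊓ FunOn F
    refine le_antisymm ?_ ?_
    · refine conV_inf_funOn_le_of_support_inter_subset hO2.symm
        (fun w hw v hv => (horth v hv w hw).symm) hFE hF hSV hS hFY inf_le_left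
        fun w hw u hu a ha => ?_
      have haX : a ∈ E \ P := hw.2 ha.1
      exact ⟨haX.1, not_or.2 ⟨haX.2, (hSQ u hu).notMem_of_mem_left ha.2⟩⟩
    · exact le_inf (fun w hw => inf_funOn_le_conV hFY ⟨⟨hw.1, funOn_mono hFX hw.2⟩, hw.2⟩)
        inf_le_right

end Reduction

end

/-- For a presentation `Π = (V, W)` on `E` and a finite `F ⊆ E` there are
disjoint `P_F, Q_F ⊆ E ∖ F` with `E ∖ (P_F ∪ Q_F)` finite such that, for
`Π' = Π/P_F∖Q_F`, we have `Π'↾F = Π↾F` and `Π'.F = Π.F`. -/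
theorem exists_finite_reduction {α k : Type*} [Field k]
    (E : Set α) (V W : Submodule k (α → k)) (h : IsPresentationOn E V W)
    (F : Set α) (hF : F ⊆ E) (hFfin : F.Finite) :
    ∃ PF QF : Set α, PF ⊆ E \ F ∧ QF ⊆ E \ F ∧ Disjoint PF QF ∧
      (E \ (PF ∪ QF)).Finite ∧
      pairRes (pairRes (pairCon (V, W) (E \ PF)) (E \ (PF ∪ QF))) F
        = pairRes (V, W) F ∧
      pairCon (pairRes (pairCon (V, W) (E \ PF)) (E \ (PF ∪ QF))) F
        = pairCon (V, W) F := by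
  obtain ⟨S, hSV, hS⟩ := exists_finset_conV_eq_span hFfin V
  obtain ⟨T, hTW, hT⟩ := exists_finset_conV_eq_span hFfin W
  set A := ⋃ u ∈ S, support u
  set B := ⋃ u ∈ T, support u
  have hSA : ∀ u ∈ S, support u ⊆ A := fun u hu => subset_biUnion_of_mem (u := support) hu
  have hTB : ∀ u ∈ T, support u ⊆ B := fun u hu => subset_biUnion_of_mem (u := support) hu
  have hAB : (A ∩ B).Finite := by
    simp only [A, B, iUnion₂_inter, inter_iUnion₂]
    exact T.finite_toSet.biUnion fun w hw => S.finite_toSet.biUnion fun v hv =>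
      (h.2.2.1 v (hSV hv) w (hTW hw)).1
  set P := E \ (F ∪ B)
  set Q := (E ∩ B) \ (F ∪ A)
  have hPB : Disjoint P B := disjoint_sdiff_left.mono_right subset_union_right
  have hFP : Disjoint F P := disjoint_sdiff_right.mono_left subset_union_left
  have hFQ : Disjoint F Q := disjoint_sdiff_right.mono_left subset_union_left
  have hcofinite : E \ (P ∪ Q) ⊆ F ∪ A ∩ B := by
    intro a ha
    simp only [P, Q, mem_sdiff, mem_union, mem_inter_iff] at ha ⊢
    tauto
  refine ⟨P, Q, sdiff_subset_sdiff_right subset_union_left,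
    sdiff_subset_sdiff inter_subset_left subset_union_left,
    hPB.mono_right (sdiff_subset.trans inter_subset_right), (hFfin.union hAB).subset hcofinite,
    pairRes_reduction_eq h hF hFfin hTW hT.le hFP hFQ fun u hu =>
      (hPB.mono_right (hTB u hu)).symm,
    pairCon_reduction_eq h hF hFfin hSV hS.le hFP hFQ fun u hu =>
      disjoint_sdiff_right.mono_left ((hSA u hu).trans subset_union_right)⟩
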